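/- arXiv:1703.09578 — 3 statements merged into one kernel-verified Lean document; each statement's English description precedes it below -/
import Mathlib

section
/- With the identification of H with ℝ^{d-1} × ℝ×, the product of h_{s,a} and h_{s',a'} corresponds to the pair (Λ(a)⁻¹ s' + B(Λ(a)⁻¹ s')ᵀ s, a a'). -/
open Matrix

noncomputable def LamMat (n : ℕ) (l : Fin n → ℝ) (a : ℝ) : Matrix (Fin n) (Fin n) ℝ :=
  Matrix.diagonal fun i => |a| ^ (l i)

/-- `h_{s,a} = a·[[1, -sᵀΛ(a)],[0, B(s)Λ(a)]]`. -/
noncomputable def hMat (n : ℕ) (l : Fin n → ℝ)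
    (B : (Fin n → ℝ) → Matrix (Fin n) (Fin n) ℝ) (s : Fin n → ℝ) (a : ℝ) :
    Matrix (Unit ⊕ Fin n) (Unit ⊕ Fin n) ℝ :=
  a • Matrix.fromBlocks 1 (Matrix.replicateRow Unit (-(LamMat n l a *ᵥ s))) 0 (B s * LamMat n l a)

/-! In block form `h_{s,a} = a·[[1, uᵀ], [0, M]]`, and such matrices multiply by
`(u, M)(u', M') = (u' + M'ᵀ u, M M')`. The key step is to move `Λ(a)` past `B(s')` with
the compatibility condition, which turns `B(s')` into `B(t)` for `t = Λ(a)⁻¹ s'`; the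
cocycle identity `B(s) B(t) = B(t + B(t)ᵀ s)` then yields the new shear parameter, while
`Λ` is multiplicative in `a` and diagonal, hence symmetric. -/

theorem fromBlocks_one_replicateRow_mul {ι m R : Type*} [Fintype ι] [DecidableEq ι] [Fintype m]
    [Semiring R] (u u' : m → R) (M M' : Matrix m m R) :
    fromBlocks (1 : Matrix ι ι R) (replicateRow ι u) (0 : Matrix m ι R) M *
        fromBlocks 1 (replicateRow ι u') (0 : Matrix m ι R) M' =
      fromBlocks 1 (replicateRow ι (u' + u ᵥ* M')) (0 : Matrix m ι R) (M * M') := by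
  rw [fromBlocks_multiply, replicateRow_add, replicateRow_vecMul]
  simp only [Matrix.mul_zero, Matrix.zero_mul, Matrix.mul_one, Matrix.one_mul, add_zero, zero_add]

section LamMat

variable (n : ℕ) (l : Fin n → ℝ)

theorem LamMat_mul (a a' : ℝ) : LamMat n l a * LamMat n l a' = LamMat n l (a * a') := by
  simp only [LamMat, diagonal_mul_diagonal, abs_mul,
    Real.mul_rpow (abs_nonneg _) (abs_nonneg _)]

theorem LamMat_mulVec (a : ℝ) (v : Fin n → ℝ) :
    LamMat n l a *ᵥ v = v ᵥ* LamMat n l a := by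
  rw [LamMat, ← vecMul_transpose, diagonal_transpose]

theorem isUnit_det_LamMat {a : ℝ} (ha : a ≠ 0) : IsUnit (LamMat n l a).det := by
  rw [LamMat, det_diagonal, isUnit_iff_ne_zero]
  exact Finset.prod_ne_zero_iff.2 fun i _ => (Real.rpow_pos_of_pos (abs_pos.2 ha) _).ne'

end LamMat

theorem hMat_mul_general (n : ℕ) (l : Fin n → ℝ)
    (B : (Fin n → ℝ) → Matrix (Fin n) (Fin n) ℝ)
    (hmul : ∀ u v : Fin n → ℝ, B u * B v = B (v + (B v)ᵀ *ᵥ u))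
    (hcompat : ∀ a : ℝ, a ≠ 0 → ∀ s : Fin n → ℝ,
      LamMat n l a * B s * (LamMat n l a)⁻¹ = B ((LamMat n l a)⁻¹ *ᵥ s))
    (s s' : Fin n → ℝ) (a a' : ℝ) (ha : a ≠ 0) :
    hMat n l B s a * hMat n l B s' a' =
      hMat n l B
        ((LamMat n l a)⁻¹ *ᵥ s' + (B ((LamMat n l a)⁻¹ *ᵥ s'))ᵀ *ᵥ s) (a * a') := by
  set Λ := LamMat n l a
  set t := Λ⁻¹ *ᵥ s'
  have hΛ : IsUnit Λ.det := isUnit_det_LamMat n l ha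
  have hLam : LamMat n l (a * a') = LamMat n l a' * Λ := by rw [LamMat_mul, mul_comm]
  have hcomm : Λ * B s' = B t * Λ := by
    rw [← hcompat a ha s', nonsing_inv_mul_cancel_right _ _ hΛ]
  have hblock : B s * Λ * (B s' * LamMat n l a') =
      B (t + (B t)ᵀ *ᵥ s) * LamMat n l (a * a') := by
    rw [← hmul, ← LamMat_mul, Matrix.mul_assoc, ← Matrix.mul_assoc Λ, hcomm]
    simp only [Matrix.mul_assoc, Λ]
  have hrow₁ : LamMat n l a' *ᵥ s' = LamMat n l (a * a') *ᵥ t := by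
    rw [hLam, mulVec_mulVec, Matrix.mul_assoc, mul_nonsing_inv _ hΛ, Matrix.mul_one]
  have hrow₂ : (Λ *ᵥ s) ᵥ* (B s' * LamMat n l a') =
      LamMat n l (a * a') *ᵥ ((B t)ᵀ *ᵥ s) := by
    rw [LamMat_mulVec n l a, vecMul_vecMul, ← Matrix.mul_assoc, hcomm, Matrix.mul_assoc,
      LamMat_mul, LamMat_mulVec, mulVec_transpose, vecMul_vecMul]
  rw [hMat, hMat, hMat, smul_mul_smul_comm, fromBlocks_one_replicateRow_mul, hblock, neg_vecMul,
    hrow₁, hrow₂, mulVec_add, neg_add]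

/-- with the identification of `H` with `ℝⁿ × ℝˣ`, the product
`h_{s,a} h_{s',a'}` corresponds to the pair `(Λ(a)⁻¹ s' + B(Λ(a)⁻¹ s')ᵀ s, a a')`. -/
theorem hMat_mul (n : ℕ) (l : Fin n → ℝ)
    (B : (Fin n → ℝ) → Matrix (Fin n) (Fin n) ℝ)
    (h0 : B 0 = 1)
    (hmul : ∀ u v : Fin n → ℝ, B u * B v = B (v + (B v)ᵀ *ᵥ u))
    (hcompat : ∀ a : ℝ, a ≠ 0 → ∀ s : Fin n → ℝ,
      LamMat n l a * B s * (LamMat n l a)⁻¹ = B ((LamMat n l a)⁻¹ *ᵥ s))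
    (s s' : Fin n → ℝ) (a a' : ℝ) (ha : a ≠ 0) (ha' : a' ≠ 0) :
    hMat n l B s a * hMat n l B s' a' =
      hMat n l B
        ((LamMat n l a)⁻¹ *ᵥ s' + (B ((LamMat n l a)⁻¹ *ᵥ s'))ᵀ *ᵥ s) (a * a') :=
  hMat_mul_general n l B hmul hcompat s s' a a' ha
end

section
/- For a shearlet dilation group H with the change of variables a = ξ₁, s = Λ(ξ₁)⁻¹ ξ'/ξ₁, and left Haar measure |a|^{λ_D−1} ds da on H, one has ∫_H |F(hᵀξ₀)|² dh = ∫_{ℝ×ℝ^{d-1}} |F(ξ₁,ξ')|² / |ξ₁|^d dξ₁ dξ' for every nonnegative measurable F : ℝ^d → [0,∞]. -/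
open Matrix MeasureTheory ENNReal

/-- `ξ₀ = (1,0,…,0)`. -/
def xi0 (n : ℕ) : Unit ⊕ Fin n → ℝ := Sum.elim (fun _ => 1) 0

/-!
Only the first row of `h` enters `hᵀξ₀ = (a, -a Λ(a) s)`, so `B` drops out. For fixed `a ≠ 0`
the map `s ↦ -a Λ(a) s` is diagonal with `|det| = |a|^(n + λ_D)`; by Tonelli and the linear
change of variables in each fibre, the density `|a|^(λ_D - 1)` becomes `|a|^(-(n + 1))`.
-/

@[fun_prop]
theorem Measurable.sumElim_pi {α β ι κ : Type*} [MeasurableSpace α] [MeasurableSpace β]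
    {f : α → ι → β} {g : α → κ → β} (hf : Measurable f) (hg : Measurable g) :
    Measurable fun x => Sum.elim (f x) (g x) :=
  measurable_pi_iff.2 <| by
    rintro (i | j)
    · exact measurable_pi_iff.1 hf i
    · exact measurable_pi_iff.1 hg j

theorem lintegral_comp_pi_mul_left {ι : Type*} [Fintype ι] [DecidableEq ι] {c : ι → ℝ}
    (hc : ∀ i, c i ≠ 0) (g : (ι → ℝ) → ℝ≥0∞) :
    ∫⁻ x : ι → ℝ, g (fun i => c i * x i) = ENNReal.ofReal |(∏ i, c i)⁻¹| * ∫⁻ y, g y := by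
  let e : (ι → ℝ) ≃ᵐ (ι → ℝ) :=
    MeasurableEquiv.piCongrRight fun i => MeasurableEquiv.mulLeft₀ (c i) (hc i)
  have he : ⇑e = toLin' (diagonal c) := by
    ext x i
    simp only [toLin'_apply, mulVec_diagonal]
    rfl
  have hdet : (diagonal c).det ≠ 0 := by
    simpa [det_diagonal, Finset.prod_ne_zero_iff] using hc
  rw [← smul_eq_mul, ← lintegral_smul_measure, ← det_diagonal,
    ← Real.map_matrix_volume_pi_eq_smul_volume_pi hdet, ← he, lintegral_map_equiv]
  rfl

theorem abs_mul_abs_rpow {a : ℝ} (ha : a ≠ 0) (x : ℝ) : |a * |a| ^ x| = |a| ^ (1 + x) := by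
  have hpos := abs_pos.2 ha
  rw [abs_mul, abs_of_pos (Real.rpow_pos_of_pos hpos x), Real.rpow_add hpos, Real.rpow_one]

theorem abs_prod_mul_abs_rpow {ι : Type*} [Fintype ι] {a : ℝ} (ha : a ≠ 0) (l : ι → ℝ) :
    |∏ i, a * |a| ^ l i| = |a| ^ (Fintype.card ι + ∑ i, l i) := by
  simp_rw [Finset.abs_prod, abs_mul_abs_rpow ha]
  rw [← Real.rpow_sum_of_pos (abs_pos.2 ha), Finset.sum_add_distrib]
  simp

theorem lintegral_comp_orbit_scale {n : ℕ} {a : ℝ} (ha : a ≠ 0) (l : Fin n → ℝ)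
    (g : (Fin n → ℝ) → ℝ≥0∞) :
    ∫⁻ s : Fin n → ℝ,
        g (fun j => -(a * |a| ^ l j) * s j) * ENNReal.ofReal (|a| ^ ((∑ i, l i) - 1)) =
      ∫⁻ ξ, g ξ / ENNReal.ofReal (|a| ^ ((n : ℝ) + 1)) := by
  have hpos := abs_pos.2 ha
  have hc : ∀ j, -(a * |a| ^ l j) ≠ 0 := fun j =>
    neg_ne_zero.2 (mul_ne_zero ha (Real.rpow_pos_of_pos hpos _).ne')
  have habs_prod : |(∏ j, -(a * |a| ^ l j))⁻¹| = (|a| ^ ((n : ℝ) + ∑ i, l i))⁻¹ := by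
    rw [abs_inv, Finset.prod_neg, abs_mul, abs_pow, abs_neg, abs_one, one_pow, one_mul,
      abs_prod_mul_abs_rpow ha, Fintype.card_fin]
  have hscale : ENNReal.ofReal (|a| ^ ((n : ℝ) + ∑ i, l i))⁻¹ *
      ENNReal.ofReal (|a| ^ ((∑ i, l i) - 1)) = (ENNReal.ofReal (|a| ^ ((n : ℝ) + 1)))⁻¹ := by
    rw [← ENNReal.ofReal_mul (inv_nonneg.2 (Real.rpow_nonneg hpos.le _)),
      ← ENNReal.ofReal_inv_of_pos (Real.rpow_pos_of_pos hpos _), ← Real.rpow_neg hpos.le,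
      ← Real.rpow_neg hpos.le, ← Real.rpow_add hpos]
    ring_nf
  have hinv_ne_top : (ENNReal.ofReal (|a| ^ ((n : ℝ) + 1)))⁻¹ ≠ ∞ :=
    ENNReal.inv_ne_top.2 (ENNReal.ofReal_pos.2 (Real.rpow_pos_of_pos hpos _)).ne'
  simp_rw [div_eq_mul_inv]
  rw [lintegral_mul_const' _ _ ofReal_ne_top, lintegral_comp_pi_mul_left hc, habs_prod,
    lintegral_mul_const' _ _ hinv_ne_top, mul_right_comm, hscale, mul_comm]

theorem hMat_transpose_mulVec_xi0 (n : ℕ) (l : Fin n → ℝ)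
    (B : (Fin n → ℝ) → Matrix (Fin n) (Fin n) ℝ) (s : Fin n → ℝ) (a : ℝ) :
    (hMat n l B s a)ᵀ *ᵥ xi0 n = Sum.elim (fun _ => a) (fun j => -(a * |a| ^ l j) * s j) := by
  funext j
  cases j with
  | inl u => simp [hMat, xi0, mulVec, dotProduct, Fintype.sum_sum_type]
  | inr j => simp [hMat, xi0, LamMat, mulVec, dotProduct, Fintype.sum_sum_type, diagonal_apply,
      mul_assoc]

theorem haar_orbit_change_of_variables_general (n : ℕ) (l : Fin n → ℝ)
    (B : (Fin n → ℝ) → Matrix (Fin n) (Fin n) ℝ)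
    (F : (Unit ⊕ Fin n → ℝ) → ℝ≥0∞) (hF : Measurable F) :
    ∫⁻ p : (Fin n → ℝ) × ℝ,
        F ((hMat n l B p.1 p.2)ᵀ *ᵥ xi0 n) *
          ENNReal.ofReal (|p.2| ^ ((∑ i, l i) - 1)) ∂volume =
      ∫⁻ q : ℝ × (Fin n → ℝ),
        F (Sum.elim (fun _ => q.1) q.2) /
          ENNReal.ofReal (|q.1| ^ ((n : ℝ) + 1)) ∂volume := by
  simp_rw [hMat_transpose_mulVec_xi0]
  rw [Measure.volume_eq_prod, Measure.volume_eq_prod, lintegral_prod_symm _ (by fun_prop),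
    lintegral_prod _ (by fun_prop)]
  refine lintegral_congr_ae ?_
  filter_upwards [compl_mem_ae_iff.2 (measure_singleton (0 : ℝ))] with a ha
  exact lintegral_comp_orbit_scale (by simpa using ha) l fun ξ => F (Sum.elim (fun _ => a) ξ)

/-- with the left Haar measure `|a|^{λ_D−1} ds da` on `H` and the change of
variables `a = ξ₁`, `s = Λ(ξ₁)⁻¹ ξ'/ξ₁`, for every nonnegative measurable `F` one has
`∫_H F(hᵀξ₀) dh = ∫ F(ξ₁,ξ')/|ξ₁|^d dξ₁ dξ'` (here `d = n+1`, `λ_D = λ₁+⋯+λₙ`). -/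
theorem haar_orbit_change_of_variables (n : ℕ) (l : Fin n → ℝ)
    (B : (Fin n → ℝ) → Matrix (Fin n) (Fin n) ℝ)
    (htri : ∀ s : Fin n → ℝ, ∀ i j : Fin n, j < i → B s i j = 0)
    (hdiag : ∀ s : Fin n → ℝ, ∀ i : Fin n, B s i i = 1)
    (F : (Unit ⊕ Fin n → ℝ) → ℝ≥0∞) (hF : Measurable F) :
    ∫⁻ p : (Fin n → ℝ) × ℝ,
        F ((hMat n l B p.1 p.2)ᵀ *ᵥ xi0 n) *
          ENNReal.ofReal (|p.2| ^ ((∑ i, l i) - 1)) ∂volume =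
      ∫⁻ q : ℝ × (Fin n → ℝ),
        F (Sum.elim (fun _ => q.1) q.2) /
          ENNReal.ofReal (|q.1| ^ ((n : ℝ) + 1)) ∂volume :=
  haar_orbit_change_of_variables_general n l B F hF
end

section
/- Fourier slice theorem (affine form): for f ∈ L¹(ℝ^d), v ∈ ℝ^{d-1}, and τ ∈ ℝ, the one-dimensional Fourier transform of t ↦ R^aff f(v,t) at τ equals the d-dimensional Fourier transform of f evaluated at τ·(1,v), i.e. ∫_ℝ R^aff f(v,t) e^{−2πiτt} dt = f̂(τ, τv). -/
open MeasureTheory Matrix Real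

/-- The affine Radon transform `R^aff f(v,t) = ∫_{ℝⁿ} f(t − v·y, y) dy`. -/
noncomputable def Raff (n : ℕ) (f : ℝ × (Fin n → ℝ) → ℂ) (v : Fin n → ℝ) (t : ℝ) : ℂ :=
  ∫ y : Fin n → ℝ, f (t - v ⬝ᵥ y, y)

/-- The Fourier transform on `ℝ^d = ℝ × ℝⁿ`:
`f̂(ξ) = ∫ f(x) e^{−2πi ξ·x} dx`. -/
noncomputable def fourierRd (n : ℕ) (f : ℝ × (Fin n → ℝ) → ℂ) (ξ : ℝ × (Fin n → ℝ)) : ℂ :=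
  ∫ x : ℝ × (Fin n → ℝ),
    f x * Complex.exp (-(2 * π * Complex.I * ((ξ.1 * x.1 + ξ.2 ⬝ᵥ x.2 : ℝ) : ℂ)))

/-! The shear `(t, y) ↦ (t - v ⬝ᵥ y, y)` preserves Lebesgue measure on `ℝ × ℝⁿ`, being a
translation in `t` for each fixed `y`. So, by Fubini, the integral of `f(t - v·y, y) e^{-2πiτt}`
over `(t, y)` equals that of `f(s, y) e^{-2πiτ(s + v·y)}` over `(s, y)`, and
`τ(s + v·y) = τs + (τv)·y`. -/

section Shear

variable {G E : Type*} [MeasurableSpace G] [MeasurableSpace E] [AddGroup G] [MeasurableAdd G]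
  [MeasurableSub₂ G]
  {μ : Measure G} [μ.IsAddRightInvariant] [SFinite μ] {ν : Measure E} [SFinite ν] {g : E → G}

theorem measurePreserving_sub_comp_snd (hg : Measurable g) :
    MeasurePreserving (fun p : G × E => (p.1 - g p.2, p.2)) (μ.prod ν) (μ.prod ν) := by
  have hskew : MeasurePreserving (fun p : E × G => (p.1, p.2 - g p.1)) (ν.prod μ) (ν.prod μ) :=
    (MeasurePreserving.id ν).skew_product (measurable_snd.sub (hg.comp measurable_fst))
      (.of_forall fun y => (measurePreserving_sub_right μ (g y)).map_eq)
  exact Measure.measurePreserving_swap.comp (hskew.comp Measure.measurePreserving_swap)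

theorem integral_integral_sub_comp {F : Type*} [NormedAddCommGroup F] [NormedSpace ℝ F]
    (hg : Measurable g) {f : G × E → F} (hf : Integrable f (μ.prod ν)) :
    ∫ t, ∫ y, f (t - g y, y) ∂ν ∂μ = ∫ p, f p ∂(μ.prod ν) := by
  have hshear := measurePreserving_sub_comp_snd (μ := μ) (ν := ν) hg
  rw [integral_integral (f := fun t y => f (t - g y, y))
      (hshear.integrable_comp_of_integrable hf),
    ← integral_map hshear.measurable.aemeasurable (hshear.map_eq.symm ▸ hf.aestronglyMeasurable),
    hshear.map_eq]

end Shear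

theorem MeasureTheory.Integrable.mul_exp_neg_two_pi_I_mul_ofReal {α : Type*} [MeasurableSpace α] {μ : Measure α}
    {f : α → ℂ} (hf : Integrable f μ) {φ : α → ℝ} (hφ : AEStronglyMeasurable φ μ) :
    Integrable (fun x => f x * Complex.exp (-(2 * π * Complex.I * (φ x : ℂ)))) μ := by
  refine hf.mul_bdd (c := 1) ?_ (.of_forall fun x => ?_)
  · fun_prop
  · rw [Complex.norm_exp]
    simp

/-- Fourier slice theorem, affine form: for `f ∈ L¹(ℝ^d)`,
`∫ R^aff f(v,t) e^{−2πiτt} dt = f̂(τ, τv)`. -/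
theorem fourier_slice (n : ℕ) (f : ℝ × (Fin n → ℝ) → ℂ) (hf : Integrable f volume)
    (v : Fin n → ℝ) (τ : ℝ) :
    ∫ t : ℝ, Raff n f v t * Complex.exp (-(2 * π * Complex.I * ((τ * t : ℝ) : ℂ))) =
      fourierRd n f (τ, τ • v) := by
  set χ : ℝ → ℂ := fun s => Complex.exp (-(2 * π * Complex.I * ((τ * s : ℝ) : ℂ)))
  have hdot : Continuous (v ⬝ᵥ ·) := by fun_prop
  have hint : Integrable (fun p : ℝ × (Fin n → ℝ) => f p * χ (p.1 + v ⬝ᵥ p.2))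
      (volume.prod volume) :=
    hf.mul_exp_neg_two_pi_I_mul_ofReal (by fun_prop)
  calc ∫ t, Raff n f v t * χ t
      = ∫ t, ∫ y, f (t - v ⬝ᵥ y, y) * χ (t - v ⬝ᵥ y + v ⬝ᵥ y) := by
        simp only [Raff, sub_add_cancel, integral_mul_const]
    _ = ∫ p, f p * χ (p.1 + v ⬝ᵥ p.2) ∂(volume.prod volume) :=
        integral_integral_sub_comp hdot.measurable hint
    _ = fourierRd n f (τ, τ • v) := by
        simp only [fourierRd, χ, Measure.volume_eq_prod, smul_dotProduct, smul_eq_mul, mul_add]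
end
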